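/- Let f be a non-constant non-vanishing rational function on ℂ all of whose poles have multiplicity at least 2, and let Q[f] = f^{p_0}(f^{p_1})^{(q_1)} ⋯ (f^{p_k})^{(q_k)} be a differential polynomial with p_i ≥ q_i for all i, Σ q_i > 0, and weight w. Then for every a ∈ ℂ, the function z ↦ Q[f](z) − 1/(z + a) has at least w distinct zeros in ℂ. -/

import Mathlib

/-!
Write `f = c / A` with `A = ∏ (z + βⱼ)^{mⱼ}`. Inductively `(f^p)^{(q)} = c^p N / (A^p B^q)`
with `B = ∏ (z + βⱼ)`, `deg N ≤ q (t - 1)` and `N` nonzero at the poles (this uses `p ≥ q`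
and the injectivity of `β`), so `Q[f] = N / D` with `deg D = P Σ mⱼ + t Σ qᵢ`, where
`P = p₀ + Σ pᵢ`, and `deg N ≤ (t - 1) Σ qᵢ`. The zeros of `Q[f] - 1/(z + a)` are the roots of
`G = (z + a) N - D` away from the poles, and `deg G = deg D`. A root of `G` of multiplicity `μ`
is a root of multiplicity `≥ μ - 1` of the Wronskian `D G' - D' G = (D / B) ψ`, where
`deg ψ ≤ deg N + t`; the only root of `G` at a pole is `-a`, when `-a` is a pole, and it is
simple there while `ψ` vanishes there too. Hence `G` has at least
`deg D - deg ψ ≥ P Σ mⱼ + Σ qᵢ - t ≥ P + Σ qᵢ = w` admissible distinct roots, as `mⱼ ≥ 2`.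
-/

/-- The differential polynomial `Q[f] = f^{p₀} (f^{p₁})^{(q₁)} ⋯ (f^{p_k})^{(q_k)}`. -/
noncomputable def Qop (p₀ k : ℕ) (p q : Fin k → ℕ) (f : ℂ → ℂ) : ℂ → ℂ :=
  fun z => f z ^ p₀ * ∏ i, iteratedDeriv (q i) (fun w => f w ^ p i) z

open Polynomial Finset

section CommRing

variable {R : Type*} [CommRing R] {t : ℕ} (β : Fin t → R)

noncomputable def nodePoly : R[X] := ∏ j, (X + C (β j))

noncomputable def polePoly (n : Fin t → ℕ) : R[X] := ∏ j, (X + C (β j)) ^ n j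

noncomputable def logDerivNumer (n : Fin t → ℕ) : R[X] :=
  ∑ j, (n j : R[X]) * ∏ l ∈ univ.erase j, (X + C (β l))

/-- `iterDerivNumer β n q` is the numerator of the `q`-th derivative of `1 / polePoly β n`
over the denominator `polePoly β (n + q)`, see `iteratedDeriv_div_eval_polePoly`. -/
noncomputable def iterDerivNumer (n : Fin t → ℕ) : ℕ → R[X]
  | 0 => 1
  | q + 1 => derivative (iterDerivNumer n q) * nodePoly β -
      iterDerivNumer n q * logDerivNumer β (fun j => n j + q)

lemma eval_nodePoly (z : R) : (nodePoly β).eval z = ∏ j, (z + β j) := by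
  simp [nodePoly, eval_prod]

lemma eval_polePoly (n : Fin t → ℕ) (z : R) :
    (polePoly β n).eval z = ∏ j, (z + β j) ^ n j := by
  simp [polePoly, eval_prod]

lemma polePoly_add (n n' : Fin t → ℕ) :
    polePoly β (n + n') = polePoly β n * polePoly β n' := by
  simp only [polePoly, Pi.add_apply, pow_add, prod_mul_distrib]

lemma polePoly_sum {ι : Type*} (s : Finset ι) (n : ι → Fin t → ℕ) :
    polePoly β (∑ i ∈ s, n i) = ∏ i ∈ s, polePoly β (n i) := by
  simp only [polePoly, Finset.sum_apply, ← prod_pow_eq_pow_sum]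
  exact prod_comm

lemma polePoly_add_one (n : Fin t → ℕ) :
    polePoly β (fun j => n j + 1) = polePoly β n * nodePoly β := by
  simp only [polePoly, nodePoly, pow_succ, prod_mul_distrib]

lemma polePoly_eq_mul_erase (n : Fin t → ℕ) (j : Fin t) :
    polePoly β n = (X + C (β j)) ^ n j * ∏ l ∈ univ.erase j, (X + C (β l)) ^ n l :=
  (mul_prod_erase _ _ (mem_univ j)).symm

lemma monic_polePoly (n : Fin t → ℕ) : (polePoly β n).Monic :=
  monic_prod_of_monic _ _ fun j _ => (monic_X_add_C (β j)).pow (n j)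

lemma natDegree_polePoly [Nontrivial R] (n : Fin t → ℕ) :
    (polePoly β n).natDegree = ∑ j, n j := by
  rw [polePoly, natDegree_prod_of_monic _ _ fun j _ => (monic_X_add_C (β j)).pow (n j)]
  simp

lemma natDegree_X_add_C_le (r : R) : (X + C r).natDegree ≤ 1 :=
  natDegree_add_C.trans_le natDegree_X_le

lemma natDegree_nodePoly_le : (nodePoly β).natDegree ≤ t :=
  (natDegree_prod_le _ _).trans <|
    (sum_le_sum fun j _ => natDegree_X_add_C_le (β j)).trans (by simp)

lemma natDegree_logDerivNumer_le (n : Fin t → ℕ) :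
    (logDerivNumer β n).natDegree ≤ t - 1 := by
  refine natDegree_sum_le_of_forall_le _ _ fun j _ => natDegree_mul_le.trans ?_
  have : (∏ l ∈ univ.erase j, (X + C (β l))).natDegree ≤ t - 1 :=
    (natDegree_prod_le _ _).trans <|
      (sum_le_sum fun l _ => natDegree_X_add_C_le (β l)).trans (by simp)
  simpa using this

lemma derivative_nodePoly :
    derivative (nodePoly β) = ∑ j, ∏ l ∈ univ.erase j, (X + C (β l)) := by
  simp [nodePoly, derivative_prod_finset]

lemma derivative_polePoly_mul_nodePoly (n : Fin t → ℕ) :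
    derivative (polePoly β n) * nodePoly β = polePoly β n * logDerivNumer β n := by
  classical
  rw [polePoly, derivative_prod_finset, logDerivNumer, sum_mul, mul_sum]
  refine sum_congr rfl fun j _ => ?_
  rw [nodePoly, ← mul_prod_erase _ _ (mem_univ j), ← mul_prod_erase _ _ (mem_univ j)]
  rcases Nat.eq_zero_or_pos (n j) with h | h
  · simp [h]
  obtain ⟨k, hk⟩ := Nat.exists_eq_add_of_lt h
  simp only [derivative_pow, derivative_X_add_C, hk, Nat.add_sub_cancel, C_eq_natCast]
  push_cast
  ring

lemma natDegree_derivative_mul_le (p r : R[X]) :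
    (derivative p * r).natDegree ≤ p.natDegree + r.natDegree - 1 := by
  by_cases hp : derivative p = 0
  · simp [hp]
  have : 1 ≤ p.natDegree := by
    by_contra! h
    exact hp (derivative_of_natDegree_zero (by omega))
  have := natDegree_derivative_le p
  have := natDegree_mul_le (p := derivative p) (q := r)
  omega

lemma natDegree_iterDerivNumer_le (n : Fin t → ℕ) (q : ℕ) :
    (iterDerivNumer β n q).natDegree ≤ q * (t - 1) := by
  induction q with
  | zero => simp [iterDerivNumer]
  | succ q ih =>
    refine (natDegree_sub_le _ _).trans (max_le ?_ ?_)
    · have := natDegree_derivative_mul_le (iterDerivNumer β n q) (nodePoly β)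
      have := natDegree_nodePoly_le β
      rw [add_mul, one_mul]
      omega
    · refine natDegree_mul_le.trans ?_
      have := natDegree_logDerivNumer_le β (fun j => n j + q)
      rw [add_mul, one_mul]
      omega

lemma eval_nodePoly_neg (j : Fin t) : (nodePoly β).eval (-β j) = 0 := by
  rw [eval_nodePoly]
  exact prod_eq_zero (mem_univ j) (neg_add_cancel _)

lemma eval_prod_erase_neg {i j : Fin t} (hij : i ≠ j) :
    (∏ l ∈ univ.erase i, (X + C (β l))).eval (-β j) = 0 := by
  rw [eval_prod]
  exact prod_eq_zero (mem_erase.2 ⟨hij.symm, mem_univ j⟩) (by simp)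

lemma eval_derivative_nodePoly_neg (j : Fin t) :
    (derivative (nodePoly β)).eval (-β j) = ∏ l ∈ univ.erase j, (β l - β j) := by
  rw [derivative_nodePoly, eval_finsetSum, sum_eq_single j
    (fun i _ hij => eval_prod_erase_neg β hij) (by simp), eval_prod]
  exact prod_congr rfl fun l _ => by simp [neg_add_eq_sub]

lemma eval_logDerivNumer_neg (n : Fin t → ℕ) (j : Fin t) :
    (logDerivNumer β n).eval (-β j) = n j * (derivative (nodePoly β)).eval (-β j) := by
  rw [logDerivNumer, eval_finsetSum, sum_eq_single j
    (fun i _ hij => by rw [eval_mul, eval_prod_erase_neg β hij, mul_zero]) (by simp),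
    derivative_nodePoly, eval_finsetSum, sum_eq_single j
    (fun i _ hij => eval_prod_erase_neg β hij) (by simp)]
  simp

lemma eval_polePoly_neg {n : Fin t → ℕ} {j : Fin t} (hn : n j ≠ 0) :
    (polePoly β n).eval (-β j) = 0 := by
  rw [eval_polePoly]
  exact prod_eq_zero (mem_univ j) (by simp [hn])

lemma eval_derivative_polePoly_neg {n : Fin t → ℕ} {j : Fin t} (hn : 2 ≤ n j) :
    (derivative (polePoly β n)).eval (-β j) = 0 := by
  obtain ⟨k, hk⟩ := Nat.exists_eq_add_of_le hn
  rw [polePoly_eq_mul_erase β n j, hk]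
  simp [derivative_pow]

noncomputable def reducedWronskian (n : Fin t → ℕ) (a : R) (N : R[X]) : R[X] :=
  N * nodePoly β + (X + C a) * (derivative N * nodePoly β - N * logDerivNumer β n)

lemma nodePoly_mul_wronskian (n : Fin t → ℕ) (a : R) (N : R[X]) :
    nodePoly β * wronskian (polePoly β n) ((X + C a) * N - polePoly β n) =
      polePoly β n * reducedWronskian β n a N := by
  simp only [wronskian, reducedWronskian, derivative_sub, derivative_mul, derivative_X_add_C]
  linear_combination (-(X + C a) * N) * derivative_polePoly_mul_nodePoly β n

lemma natDegree_reducedWronskian_le (ht : 0 < t) (n : Fin t → ℕ) (a : R) (N : R[X]) :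
    (reducedWronskian β n a N).natDegree ≤ N.natDegree + t := by
  have hB := natDegree_nodePoly_le β
  refine (natDegree_add_le _ _).trans (max_le (natDegree_mul_le.trans (by omega)) ?_)
  refine natDegree_mul_le.trans ?_
  have := natDegree_X_add_C_le a
  have := natDegree_sub_le (derivative N * nodePoly β) (N * logDerivNumer β n)
  have := natDegree_derivative_mul_le N (nodePoly β)
  have := natDegree_mul_le (p := N) (q := logDerivNumer β n)
  have := natDegree_logDerivNumer_le β n
  omega

lemma eval_reducedWronskian_neg (n : Fin t → ℕ) (a : R) (N : R[X]) (j : Fin t) :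
    (reducedWronskian β n a N).eval (-β j) =
      -((a - β j) * N.eval (-β j) * n j * (derivative (nodePoly β)).eval (-β j)) := by
  simp only [reducedWronskian, eval_add, eval_mul, eval_sub, eval_X, eval_C,
    eval_nodePoly_neg, eval_logDerivNumer_neg]
  ring

lemma eval_derivative_reducedWronskian_neg (n : Fin t → ℕ) (N : R[X]) (j : Fin t) :
    (derivative (reducedWronskian β n (β j) N)).eval (-β j) =
      N.eval (-β j) * (derivative (nodePoly β)).eval (-β j) * (1 - n j) := by
  simp only [reducedWronskian, derivative_add, derivative_mul, derivative_sub,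
    derivative_X, derivative_C, eval_add, eval_mul, eval_sub, eval_X, eval_C, eval_one, eval_zero,
    eval_nodePoly_neg, eval_logDerivNumer_neg, neg_add_cancel]
  ring

lemma natDegree_prod_iterDerivNumer_le {ι : Type*} (s : Finset ι) (n : ι → Fin t → ℕ)
    (q : ι → ℕ) :
    (∏ i ∈ s, iterDerivNumer β (n i) (q i)).natDegree ≤ (∑ i ∈ s, q i) * (t - 1) :=
  (natDegree_prod_le _ _).trans <| (sum_le_sum fun _ _ => natDegree_iterDerivNumer_le β _ _).trans
    (sum_mul _ _ _).ge

end CommRing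

section Field

variable {K : Type*} [Field K] {t : ℕ} (β : Fin t → K)

lemma pow_div_eval_polePoly (c : K) (m : Fin t → ℕ) (r : ℕ) (w : K) :
    (c / (polePoly β m).eval w) ^ r = c ^ r / (polePoly β (r • m)).eval w := by
  simp only [eval_polePoly, div_pow, ← prod_pow, ← pow_mul, Pi.smul_apply, smul_eq_mul,
    mul_comm]

lemma eval_nodePoly_ne_zero {z : K} (hz : ∀ j, z + β j ≠ 0) : (nodePoly β).eval z ≠ 0 := by
  rw [eval_nodePoly]
  exact prod_ne_zero_iff.2 fun j _ => hz j

lemma eval_polePoly_ne_zero (n : Fin t → ℕ) {z : K} (hz : ∀ j, z + β j ≠ 0) :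
    (polePoly β n).eval z ≠ 0 := by
  rw [eval_polePoly]
  exact prod_ne_zero_iff.2 fun j _ => pow_ne_zero _ (hz j)

lemma eval_derivative_nodePoly_neg_ne_zero (hβ : Function.Injective β) (j : Fin t) :
    (derivative (nodePoly β)).eval (-β j) ≠ 0 := by
  rw [eval_derivative_nodePoly_neg]
  exact prod_ne_zero_iff.2 fun l hl => sub_ne_zero.2 fun h => (mem_erase.1 hl).1 (hβ h)

lemma eval_iterDerivNumer_neg_ne_zero [CharZero K] (hβ : Function.Injective β)
    {n : Fin t → ℕ} (hn : ∀ j, n j ≠ 0) (q : ℕ) (j : Fin t) :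
    (iterDerivNumer β n q).eval (-β j) ≠ 0 := by
  induction q with
  | zero => simp [iterDerivNumer]
  | succ q ih =>
    rw [iterDerivNumer, eval_sub, eval_mul, eval_mul, eval_nodePoly_neg, mul_zero, zero_sub,
      neg_ne_zero, eval_logDerivNumer_neg]
    refine mul_ne_zero ih (mul_ne_zero ?_ (eval_derivative_nodePoly_neg_ne_zero β hβ j))
    exact_mod_cast (hn j ∘ Nat.eq_zero_of_add_eq_zero_right)

lemma eval_prod_iterDerivNumer_neg_ne_zero [CharZero K] (hβ : Function.Injective β)
    {m : Fin t → ℕ} (hm : ∀ j, m j ≠ 0) {k : ℕ} {p q : Fin k → ℕ}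
    (hpq : ∀ i, q i ≤ p i) (j : Fin t) :
    (∏ i, iterDerivNumer β (p i • m) (q i)).eval (-β j) ≠ 0 := by
  rw [eval_prod]
  refine prod_ne_zero_iff.2 fun i _ => ?_
  rcases Nat.eq_zero_or_pos (q i) with hq | hq
  · simp [hq, iterDerivNumer]
  · have hp : p i ≠ 0 := by have := hpq i; omega
    exact eval_iterDerivNumer_neg_ne_zero β hβ (fun l => mul_ne_zero hp (hm l)) _ j

lemma rootMultiplicity_le_rootMultiplicity_wronskian_add_one [CharZero K] (A G : K[X])
    (hW : wronskian A G ≠ 0) (z : K) :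
    G.rootMultiplicity z ≤ (wronskian A G).rootMultiplicity z + 1 := by
  set μ := G.rootMultiplicity z
  have hG' : (X - C z) ^ (μ - 1) ∣ derivative G :=
    (pow_dvd_pow _ (rootMultiplicity_sub_one_le_derivative_rootMultiplicity G z)).trans
      (pow_rootMultiplicity_dvd _ z)
  have hG : (X - C z) ^ (μ - 1) ∣ G :=
    (pow_dvd_pow _ (Nat.sub_le μ 1)).trans (pow_rootMultiplicity_dvd _ z)
  have : μ - 1 ≤ (wronskian A G).rootMultiplicity z :=
    (le_rootMultiplicity_iff hW).2 (dvd_sub (hG'.mul_left A) (hG.mul_left (derivative A)))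
  omega

lemma reducedWronskian_ne_zero [CharZero K] (ht : 0 < t) (hβ : Function.Injective β)
    {n : Fin t → ℕ} (hn : ∀ j, 2 ≤ n j) (a : K) {N : K[X]}
    (hN : ∀ j, N.eval (-β j) ≠ 0) :
    reducedWronskian β n a N ≠ 0 := by
  intro h0
  by_cases ha : ∃ j, a = β j
  · obtain ⟨j, rfl⟩ := ha
    have := eval_derivative_reducedWronskian_neg β n N j
    rw [h0, derivative_zero, eval_zero] at this
    refine mul_ne_zero (mul_ne_zero (hN j) (eval_derivative_nodePoly_neg_ne_zero β hβ j)) ?_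
      this.symm
    rw [sub_ne_zero]
    exact_mod_cast (by have := hn j; omega : 1 ≠ n j)
  · simp only [not_exists] at ha
    have := eval_reducedWronskian_neg β n a N ⟨0, ht⟩
    rw [h0, eval_zero, eq_comm, neg_eq_zero] at this
    refine mul_ne_zero (mul_ne_zero (mul_ne_zero (sub_ne_zero.2 (ha _)) (hN _)) ?_)
      (eval_derivative_nodePoly_neg_ne_zero β hβ _) this
    exact_mod_cast (by have := hn ⟨0, ht⟩; omega : n ⟨0, ht⟩ ≠ 0)

lemma rootMultiplicity_wronskian_eq {n : Fin t → ℕ} {a : K} {N : K[X]}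
    (hW : wronskian (polePoly β n) ((X + C a) * N - polePoly β n) ≠ 0) {z : K}
    (hz : ∀ j, z + β j ≠ 0) :
    (wronskian (polePoly β n) ((X + C a) * N - polePoly β n)).rootMultiplicity z =
      (reducedWronskian β n a N).rootMultiplicity z := by
  have hB := eval_nodePoly_ne_zero β hz
  have hA := eval_polePoly_ne_zero β n hz
  have hBW : nodePoly β * wronskian (polePoly β n) ((X + C a) * N - polePoly β n) ≠ 0 :=
    mul_ne_zero (fun h => hB (by simp [h])) hW
  have key := congrArg (rootMultiplicity z) (nodePoly_mul_wronskian β n a N)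
  rw [rootMultiplicity_mul hBW, rootMultiplicity_mul (nodePoly_mul_wronskian β n a N ▸ hBW),
    rootMultiplicity_eq_zero hB, rootMultiplicity_eq_zero hA] at key
  simpa using key

lemma exists_pole_of_isRoot_sub_polePoly {n : Fin t → ℕ} (hn : ∀ j, n j ≠ 0) {a : K}
    {N : K[X]} (hN : ∀ j, N.eval (-β j) ≠ 0) {z : K}
    (hroot : ((X + C a) * N - polePoly β n).IsRoot z)
    (hbad : ¬((∀ j, z + β j ≠ 0) ∧ z + a ≠ 0)) : ∃ j, z = -β j ∧ a = β j := by
  by_cases hz : ∀ j, z + β j ≠ 0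
  · have hza : z + a = 0 := by tauto
    have := eval_polePoly_ne_zero β n hz
    simp_all [IsRoot]
  · push Not at hz
    obtain ⟨j, hj⟩ := hz
    obtain rfl : z = -β j := eq_neg_of_add_eq_zero_left hj
    refine ⟨j, rfl, ?_⟩
    simp only [IsRoot, eval_sub, eval_mul, eval_add, eval_X, eval_C,
      eval_polePoly_neg β (hn j), sub_zero] at hroot
    have := (mul_eq_zero.1 hroot).resolve_right (hN j)
    linear_combination this

lemma rootMultiplicity_sub_polePoly_neg_le [CharZero K] {n : Fin t → ℕ} (hn : ∀ j, 2 ≤ n j)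
    {N : K[X]} (hN : ∀ j, N.eval (-β j) ≠ 0) {j : Fin t}
    (hψ : reducedWronskian β n (β j) N ≠ 0) :
    ((X + C (β j)) * N - polePoly β n).rootMultiplicity (-β j) ≤
      (reducedWronskian β n (β j) N).rootMultiplicity (-β j) := by
  have hderiv : (derivative ((X + C (β j)) * N - polePoly β n)).eval (-β j) ≠ 0 := by
    simpa [eval_derivative_polePoly_neg β (hn j)] using hN j
  have hsimple := rootMultiplicity_sub_one_le_derivative_rootMultiplicity
    ((X + C (β j)) * N - polePoly β n) (-β j)
  rw [rootMultiplicity_eq_zero hderiv] at hsimple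
  have hψroot : 0 < (reducedWronskian β n (β j) N).rootMultiplicity (-β j) :=
    (rootMultiplicity_pos hψ).2 (by simp [IsRoot, eval_reducedWronskian_neg])
  omega

open Classical in
noncomputable def admissibleRoots (a : K) (G : K[X]) : Finset K :=
  G.roots.toFinset.filter fun z => (∀ j, z + β j ≠ 0) ∧ z + a ≠ 0

lemma roots_sub_polePoly_le [CharZero K] (ht : 0 < t) (hβ : Function.Injective β)
    {n : Fin t → ℕ} (hn : ∀ j, 2 ≤ n j) {N : K[X]} (hN : ∀ j, N.eval (-β j) ≠ 0)
    (a : K) :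
    ((X + C a) * N - polePoly β n).roots ≤ (reducedWronskian β n a N).roots +
      (admissibleRoots β a ((X + C a) * N - polePoly β n)).val := by
  classical
  set G := (X + C a) * N - polePoly β n
  set S := admissibleRoots β a G
  have hψ := reducedWronskian_ne_zero β ht hβ hn a hN
  have hW : wronskian (polePoly β n) G ≠ 0 := fun h =>
    mul_ne_zero (monic_polePoly β n).ne_zero hψ <| by rw [← nodePoly_mul_wronskian, h, mul_zero]
  have hG : G ≠ 0 := fun h => hW (by rw [h, wronskian_zero_right])
  refine Multiset.le_iff_count.2 fun z => ?_
  simp only [count_roots, Multiset.count_add, Multiset.count_eq_of_nodup S.nodup, mem_val]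
  split_ifs with hzS
  · rw [← rootMultiplicity_wronskian_eq β hW (mem_filter.1 hzS).2.1]
    exact rootMultiplicity_le_rootMultiplicity_wronskian_add_one _ G hW z
  by_cases hroot : G.IsRoot z
  · have hbad : ¬((∀ j, z + β j ≠ 0) ∧ z + a ≠ 0) := fun hgood =>
      hzS (mem_filter.2 ⟨Multiset.mem_toFinset.2 ((mem_roots hG).2 hroot), hgood⟩)
    obtain ⟨j, rfl, rfl⟩ := exists_pole_of_isRoot_sub_polePoly β
      (fun j => by have := hn j; omega) hN hroot hbad
    exact rootMultiplicity_sub_polePoly_neg_le β hn hN hψ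
  · simp [rootMultiplicity_eq_zero hroot]

lemma mul_eval_eq_eval_polePoly_of_mem_admissibleRoots {n : Fin t → ℕ} {a : K} {N : K[X]}
    {z : K} (hz : z ∈ admissibleRoots β a ((X + C a) * N - polePoly β n)) :
    (∀ j, z + β j ≠ 0) ∧ z + a ≠ 0 ∧ (z + a) * N.eval z = (polePoly β n).eval z := by
  classical
  obtain ⟨hzG, hgood⟩ := mem_filter.1 hz
  have hroot := isRoot_of_mem_roots (Multiset.mem_toFinset.1 hzG)
  simp only [IsRoot, eval_sub, eval_mul, eval_add, eval_X, eval_C, sub_eq_zero] at hroot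
  exact ⟨hgood.1, hgood.2, hroot⟩

theorem natDegree_polePoly_le_card_admissibleRoots [CharZero K] [IsAlgClosed K] (ht : 0 < t)
    (hβ : Function.Injective β) {n : Fin t → ℕ} (hn : ∀ j, 2 ≤ n j) {N : K[X]}
    (hN : ∀ j, N.eval (-β j) ≠ 0) (a : K) :
    (polePoly β n).natDegree ≤
      #(admissibleRoots β a ((X + C a) * N - polePoly β n)) + N.natDegree + t := by
  have hψ := natDegree_reducedWronskian_le β ht n a N
  by_cases hlt : ((X + C a) * N).natDegree < (polePoly β n).natDegree
  · have hcard := Multiset.card_le_card (roots_sub_polePoly_le β ht hβ hn hN a)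
    rw [Multiset.card_add, IsAlgClosed.card_roots_eq_natDegree,
      natDegree_sub_eq_right_of_natDegree_lt hlt, card_val] at hcard
    have := card_roots' (reducedWronskian β n a N)
    omega
  · have := natDegree_mul_le (p := X + C a) (q := N)
    have := natDegree_X_add_C_le a
    omega

end Field

section Derivatives

variable {𝕜 : Type*} [NontriviallyNormedField 𝕜] {t : ℕ} (β : Fin t → 𝕜)

lemma iteratedDeriv_div_eval_polePoly (c : 𝕜) (n : Fin t → ℕ) (q : ℕ) {z : 𝕜}
    (hz : ∀ j, z + β j ≠ 0) :
    iteratedDeriv q (fun w => c / (polePoly β n).eval w) z =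
      c * (iterDerivNumer β n q).eval z / (polePoly β (fun j => n j + q)).eval z := by
  induction q generalizing z with
  | zero => simp [iterDerivNumer]
  | succ q ih =>
    have hnear : ∀ᶠ w in nhds z, ∀ j, w + β j ≠ 0 :=
      Filter.eventually_all.2 fun j =>
        ((continuous_add_const (β j)).tendsto z).eventually_ne (hz j)
    have hsucc : iteratedDeriv q (fun w => c / (polePoly β n).eval w) =ᶠ[nhds z]
        fun w => c * (iterDerivNumer β n q).eval w / (polePoly β (fun j => n j + q)).eval w :=
      hnear.mono fun w hw => ih hw
    rw [iteratedDeriv_succ, hsucc.deriv_eq]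
    have hA := eval_polePoly_ne_zero β (fun j => n j + q) hz
    have hB := eval_nodePoly_ne_zero β hz
    have hsucc_pole : polePoly β (fun j => n j + (q + 1)) =
        polePoly β (fun j => n j + q) * nodePoly β :=
      polePoly_add_one β _
    have hlog := congrArg (eval z) (derivative_polePoly_mul_nodePoly β (fun j => n j + q))
    simp only [eval_mul] at hlog
    rw [(((Polynomial.hasDerivAt _ z).const_mul c).fun_div (Polynomial.hasDerivAt _ z) hA).deriv,
      hsucc_pole, iterDerivNumer, eval_mul, eval_sub, eval_mul, eval_mul]
    field_simp
    linear_combination (-c * (iterDerivNumer β n q).eval z) * hlog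

end Derivatives

lemma Qop_eq_div {t : ℕ} (β : Fin t → ℂ) (c : ℂ) (m : Fin t → ℕ) (p₀ k : ℕ)
    (p q : Fin k → ℕ) {z : ℂ} (hz : ∀ j, z + β j ≠ 0) :
    Qop p₀ k p q (fun w => c / ∏ j, (w + β j) ^ m j) z =
      (C (c ^ (p₀ + ∑ i, p i)) * ∏ i, iterDerivNumer β (p i • m) (q i)).eval z /
        (polePoly β (fun j => (p₀ + ∑ i, p i) * m j + ∑ i, q i)).eval z := by
  have hexp : (fun j => (p₀ + ∑ i, p i) * m j + ∑ i, q i) =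
      p₀ • m + ∑ i, fun j => p i * m j + q i := by
    funext j
    simp only [Pi.add_apply, Pi.smul_apply, smul_eq_mul, Finset.sum_apply, sum_add_distrib,
      ← sum_mul]
    ring
  simp only [Qop, ← eval_polePoly, pow_div_eval_polePoly,
    iteratedDeriv_div_eval_polePoly β _ _ _ hz, hexp, polePoly_add, polePoly_sum, eval_mul,
    eval_prod, eval_C, prod_div_distrib, prod_mul_distrib, prod_pow_eq_pow_sum, pow_add]
  simp only [Pi.smul_apply, smul_eq_mul]
  ring

/-- Lemma 2.6: if `f = c / Π(z+βᵢ)^{mᵢ}` is a non-constant non-vanishing rational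
function all of whose poles are multiple, then for every `a ∈ ℂ` the function
`Q[f](z) - 1/(z+a)` has at least `w` distinct zeros in `ℂ`. -/
theorem stmt8 (t : ℕ) (ht : 1 ≤ t) (c : ℂ) (hc : c ≠ 0)
    (β : Fin t → ℂ) (hβ : Function.Injective β) (m : Fin t → ℕ) (hm : ∀ i, 2 ≤ m i)
    (k p₀ : ℕ) (p q : Fin k → ℕ) (hpq : ∀ i, q i ≤ p i) (hq : 0 < ∑ i, q i)
    (w : ℕ) (hw : w = p₀ + ∑ i, p i + ∑ i, q i) (a : ℂ) :
    ∃ S : Finset ℂ, w ≤ S.card ∧ ∀ z ∈ S, (∀ i, z + β i ≠ 0) ∧ z + a ≠ 0 ∧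
      Qop p₀ k p q (fun w' => c / ∏ i, (w' + β i) ^ m i) z = 1 / (z + a) := by
  set P := p₀ + ∑ i, p i
  set sq := ∑ i, q i
  have hP : sq ≤ P := (sum_le_sum fun i _ => hpq i).trans (Nat.le_add_left _ _)
  set N : ℂ[X] := C (c ^ P) * ∏ i, iterDerivNumer β (p i • m) (q i)
  have hN : ∀ j, N.eval (-β j) ≠ 0 := fun j => by
    rw [eval_mul, eval_C]
    exact mul_ne_zero (pow_ne_zero _ hc)
      (eval_prod_iterDerivNumer_neg_ne_zero β hβ (fun j => by have := hm j; omega) hpq j)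
  have hn : ∀ j, 2 ≤ P * m j + sq := fun j => by
    have := Nat.mul_le_mul (show 1 ≤ P by omega) (hm j); omega
  refine ⟨admissibleRoots β a ((X + C a) * N - polePoly β fun j => P * m j + sq), ?_,
    fun z hz => ?_⟩
  · have hdeg := natDegree_polePoly_le_card_admissibleRoots β ht hβ hn hN a
    have hNdeg : N.natDegree ≤ sq * (t - 1) :=
      (natDegree_C_mul_le _ _).trans (natDegree_prod_iterDerivNumer_le β _ _ _)
    have hsum : ∑ _j : Fin t, 2 ≤ ∑ j, m j := sum_le_sum fun j _ => hm j
    rw [sum_const, card_univ, Fintype.card_fin, smul_eq_mul] at hsum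
    rw [natDegree_polePoly, sum_add_distrib, ← mul_sum, sum_const, card_univ, Fintype.card_fin,
      smul_eq_mul] at hdeg
    obtain ⟨s, rfl⟩ := Nat.exists_eq_add_of_le' ht
    rw [Nat.add_sub_cancel] at hNdeg
    nlinarith [Nat.mul_le_mul_left P hsum, Nat.le_mul_of_pos_left s (hq.trans_le hP)]
  · obtain ⟨hzβ, hza, heq⟩ := mul_eval_eq_eval_polePoly_of_mem_admissibleRoots β hz
    refine ⟨hzβ, hza, ?_⟩
    have hNz : N.eval z ≠ 0 := fun h0 =>
      eval_polePoly_ne_zero β _ hzβ (by rw [← heq, h0, mul_zero])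
    rw [Qop_eq_div β c m p₀ k p q hzβ, ← heq, div_mul_cancel_right₀ hNz, one_div]
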